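/- arXiv:0912.2151 — 2 statements merged into one kernel-verified Lean document; each statement's English description precedes it below -/
import Mathlib

section
/- Let Δ be a Gorenstein* simplicial complex on {1,...,m}, σ ∈ Δ a face of dimension d−1 with d ≥ 2, z a new variable, and M = Hom_{k[Δ][z]}((J_σ, z), k[Δ][z]). Then M is generated as a k[Δ][z]-module by the inclusion map i : (J_σ, z) → k[Δ][z] together with the unique homomorphism φ_σ satisfying φ_σ(z) = x_σ and φ_σ(u) = 0 for all u ∈ J_σ. -/
set_option synthInstance.maxHeartbeats 1000000
set_option maxHeartbeats 1000000

open MvPolynomial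
/-- An (abstract) simplicial complex on the vertex set `{1, …, m}` (modeled as `Fin m`):
a collection of finite subsets containing all singletons and closed under taking subsets. -/
def IsComplex {m : ℕ} (Δ : Set (Finset (Fin m))) : Prop :=
  (∀ i : Fin m, {i} ∈ Δ) ∧ ∀ ⦃s⦄, s ∈ Δ → ∀ ⦃t : Finset (Fin m)⦄, t ⊆ s → t ∈ Δ

/-- The square-free monomial with support `ρ`. -/
noncomputable def xmon (k : Type*) [Field k] {m : ℕ} (ρ : Finset (Fin m)) :
    MvPolynomial (Fin m) k := ∏ i ∈ ρ, X i

/-- The Stanley–Reisner ideal of `Δ`: generated by the square-free monomials of non-faces. -/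
noncomputable def srIdeal (k : Type*) [Field k] {m : ℕ} (Δ : Set (Finset (Fin m))) :
    Ideal (MvPolynomial (Fin m) k) :=
  Ideal.span ((fun ρ => xmon k ρ) '' {ρ : Finset (Fin m) | ρ ∉ Δ})

/-- The Stanley–Reisner ring `k[Δ]`. -/
abbrev SR (k : Type*) [Field k] {m : ℕ} (Δ : Set (Finset (Fin m))) :=
  MvPolynomial (Fin m) k ⧸ srIdeal k Δ

/-- The class of the monomial `x_σ` in `k[Δ]`. -/
noncomputable def xcls (k : Type*) [Field k] {m : ℕ} (Δ : Set (Finset (Fin m)))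
    (σ : Finset (Fin m)) : SR k Δ :=
  Ideal.Quotient.mk (srIdeal k Δ) (xmon k σ)

/-- `J_σ = (0 : x_σ)`, the annihilator of `x_σ` in `k[Δ]`. -/
noncomputable def Jσ (k : Type*) [Field k] {m : ℕ} (Δ : Set (Finset (Fin m)))
    (σ : Finset (Fin m)) : Ideal (SR k Δ) :=
  (⊥ : Ideal (SR k Δ)).colon (Ideal.span {xcls k Δ σ})

/-- Facets: faces maximal under inclusion. -/
def IsFacet {m : ℕ} (Δ : Set (Finset (Fin m))) (τ : Finset (Fin m)) : Prop :=
  τ ∈ Δ ∧ ∀ ρ ∈ Δ, τ ⊆ ρ → τ = ρ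

/-- A complex is pure if all facets have the same cardinality. -/
def IsPure {m : ℕ} (Δ : Set (Finset (Fin m))) : Prop :=
  ∀ τ ρ, IsFacet Δ τ → IsFacet Δ ρ → τ.card = ρ.card

/-- The link of a face `σ`. -/
def link {m : ℕ} (Δ : Set (Finset (Fin m))) (σ : Finset (Fin m)) :
    Set (Finset (Fin m)) :=
  {τ | Disjoint τ σ ∧ τ ∪ σ ∈ Δ}

/-- One more than the dimension of `Δ`: the largest cardinality of a face. -/
noncomputable def topCard {m : ℕ} (Δ : Set (Finset (Fin m))) : ℕ :=
  sSup ((fun σ : Finset (Fin m) => σ.card) '' Δ)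

/-- The space of simplicial `c`-chains (indexed by cardinality `c`; the empty set is
the unique "(-1)-dimensional" chain generator, giving *reduced* chains). -/
abbrev SChain (k : Type*) [Field k] (m c : ℕ) : Type _ :=
  {σ : Finset (Fin m) // σ.card = c} →₀ k

/-- The simplicial boundary map on chains of cardinality `c`. -/
noncomputable def sBdry (k : Type*) [Field k] (m c : ℕ) :
    SChain k m c →ₗ[k] SChain k m (c - 1) :=
  Finsupp.lsum k fun σ => LinearMap.toSpanSingleton k _
    (∑ j ∈ σ.1.attach, ((-1 : k) ^ ((σ.1.filter (fun a => a < j.1)).card)) •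
      Finsupp.single ⟨σ.1.erase j.1, by rw [Finset.card_erase_of_mem j.2, σ.2]⟩ 1)

/-- Chains supported on faces of `Δ`. -/
noncomputable def faceSpan (k : Type*) [Field k] {m : ℕ} (Δ : Set (Finset (Fin m)))
    (c : ℕ) : Submodule k (SChain k m c) :=
  Submodule.span k
    {x | ∃ σ : {σ : Finset (Fin m) // σ.card = c}, σ.1 ∈ Δ ∧ x = Finsupp.single σ 1}

/-- Reduced simplicial homology of `Δ` (with coefficients in `k`) in chain-cardinality `c`,
i.e. `H̃_{c-1}(Δ; k)`. -/
noncomputable abbrev sCycles (k : Type*) [Field k] {m : ℕ} (Δ : Set (Finset (Fin m)))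
    (c : ℕ) : Submodule k (SChain k m c) :=
  LinearMap.ker (sBdry k m c) ⊓ faceSpan k Δ c

noncomputable def redHomology (k : Type*) [Field k] {m : ℕ} (Δ : Set (Finset (Fin m)))
    (c : ℕ) : Type _ :=
  letI : HasQuotient (sCycles k Δ c) (Submodule k (sCycles k Δ c)) := Submodule.hasQuotient (R := k) (M := sCycles k Δ c)
  (sCycles k Δ c) ⧸
    (Submodule.comap (sCycles k Δ c).subtype
      (Submodule.map (sBdry k m (c + 1)) (faceSpan k Δ (c + 1))))

noncomputable instance (k : Type*) [Field k] {m : ℕ} (Δ : Set (Finset (Fin m))) (c : ℕ) :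
    AddCommGroup (redHomology k Δ c) := by unfold redHomology; infer_instance

noncomputable instance (k : Type*) [Field k] {m : ℕ} (Δ : Set (Finset (Fin m))) (c : ℕ) :
    Module k (redHomology k Δ c) := by unfold redHomology; infer_instance

/-- `Δ` is Gorenstein* over `k`: for every face `σ` the link of `σ` has the reduced homology
of a sphere of dimension `dim lk(σ)`.  (Chain-cardinality `c` corresponds to dimension
`c - 1`, and `topCard` is `dim + 1`.) -/
def IsGorensteinStar (k : Type*) [Field k] {m : ℕ} (Δ : Set (Finset (Fin m))) : Prop :=
  ∀ σ ∈ Δ, ∀ c : ℕ,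
    Module.rank k (redHomology k (link Δ σ) c) =
      if c = topCard (link Δ σ) then 1 else 0

/-- The ideal `(J_σ, z)` of `k[Δ][z]`. -/
noncomputable def JzIdeal (k : Type*) [Field k] {m : ℕ} (Δ : Set (Finset (Fin m)))
    (σ : Finset (Fin m)) : Ideal (Polynomial (SR k Δ)) :=
  Ideal.span (Polynomial.C '' (Jσ k Δ σ : Set (SR k Δ)) ∪ {Polynomial.X})

lemma X_mem_JzIdeal (k : Type*) [Field k] {m : ℕ} (Δ : Set (Finset (Fin m)))
    (σ : Finset (Fin m)) : (Polynomial.X : Polynomial (SR k Δ)) ∈ JzIdeal k Δ σ :=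
  Ideal.subset_span (Or.inr rfl)

lemma C_mem_JzIdeal (k : Type*) [Field k] {m : ℕ} (Δ : Set (Finset (Fin m)))
    (σ : Finset (Fin m)) (u : SR k Δ) (hu : u ∈ Jσ k Δ σ) :
    (Polynomial.C u : Polynomial (SR k Δ)) ∈ JzIdeal k Δ σ :=
  Ideal.subset_span (Or.inl ⟨u, hu, rfl⟩)

/-!
A homomorphism `f` from an ideal containing a nonzerodivisor `t` is determined by `f t`, since
`t * f p = p * f t`. Taking `t = z` and `a = f z`, the constant terms of `z * f u = u * a`
(`u ∈ J_σ`) show `a(0) ∈ (0 : J_σ)`. If `(0 : J_σ) = (x_σ)`, say `a(0) = w x_σ`, then `f` and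
`(a / z) • i + w • φ_σ` agree at `z`, hence everywhere.

The equality `(0 : J_σ) = (x_σ)` is where Gorenstein* enters. Both sides are monomial ideals; if
a monomial with face support `τ ⊉ σ` were killed by `J_σ`, then every `ρ` with `ρ ∪ τ ∈ Δ`
would have `ρ ∪ σ ∈ Δ`, so any vertex of `σ \ τ` is a cone point of `lk τ`, whose top reduced
homology would then vanish.
-/

open scoped Polynomial

namespace Ideal

variable {S : Type*} [CommRing S] {I : Ideal S}

lemma coe_mul_apply_comm (f : I →ₗ[S] S) (a b : I) : (a : S) * f b = b * f a := by
  rw [← smul_eq_mul, ← map_smul, ← smul_eq_mul, ← map_smul]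
  exact congrArg f (Subtype.ext (mul_comm _ _))

lemma hom_ext_of_isLeftRegular {f g : I →ₗ[S] S} {t : I} (ht : IsLeftRegular (t : S))
    (h : f t = g t) : f = g :=
  LinearMap.ext fun p => ht <| by
    simp only [coe_mul_apply_comm _ t p, h]

variable {R : Type*} [CommRing R] (J : Ideal R)

noncomputable def adjoinX : Ideal R[X] :=
  span (Polynomial.C '' (J : Set R) ∪ {Polynomial.X})

lemma X_mem_adjoinX : Polynomial.X ∈ J.adjoinX :=
  subset_span (Or.inr rfl)

lemma coeff_zero_mem_of_mem_adjoinX {p : R[X]} (hp : p ∈ J.adjoinX) : p.coeff 0 ∈ J := by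
  have : J.adjoinX ≤ J.comap (Polynomial.constantCoeff) := by
    rw [adjoinX, span_le]
    rintro q (⟨u, hu, rfl⟩ | rfl)
    · simpa using hu
    · simp
  exact this hp

lemma adjoinX_hom_ext {f g : J.adjoinX →ₗ[R[X]] R[X]}
    (h : f ⟨Polynomial.X, J.X_mem_adjoinX⟩ = g ⟨Polynomial.X, J.X_mem_adjoinX⟩) : f = g :=
  hom_ext_of_isLeftRegular (t := ⟨Polynomial.X, J.X_mem_adjoinX⟩) Polynomial.isRegular_X.left h

variable {J} {x : R}

lemma X_mul_C_mul_divX (hx : ∀ u ∈ J, u * x = 0) {p : R[X]} (hp : p ∈ J.adjoinX) :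
    Polynomial.X * (Polynomial.C x * p.divX) = Polynomial.C x * p := by
  have hx0 : x * p.coeff 0 = 0 := by rw [mul_comm, hx _ (J.coeff_zero_mem_of_mem_adjoinX hp)]
  conv_rhs => rw [← p.X_mul_divX_add]
  rw [mul_add, ← Polynomial.C_mul, hx0, Polynomial.C_0, add_zero, mul_left_comm]

/-- The map `φ_σ`: `p ↦ x · (p / X)` is `R[X]`-linear on `(J, X)` because `x` kills the constant
terms, which lie in `J`. -/
noncomputable def adjoinXHom (hx : ∀ u ∈ J, u * x = 0) : J.adjoinX →ₗ[R[X]] R[X] where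
  toFun p := Polynomial.C x * (p : R[X]).divX
  map_add' p q := by simp only [Submodule.coe_add, Polynomial.divX_add, mul_add]
  map_smul' r p := Polynomial.isRegular_X.left <| by
    show Polynomial.X * _ = Polynomial.X * _
    rw [SetLike.val_smul, smul_eq_mul, RingHom.id_apply, smul_eq_mul,
      X_mul_C_mul_divX hx (J.adjoinX.mul_mem_left r p.2), mul_left_comm _ r,
      mul_left_comm _ r, X_mul_C_mul_divX hx p.2]

variable (hx : ∀ u ∈ J, u * x = 0)

lemma X_mul_adjoinXHom (p : J.adjoinX) :
    Polynomial.X * adjoinXHom hx p = Polynomial.C x * (p : R[X]) :=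
  X_mul_C_mul_divX hx p.2

lemma adjoinXHom_X : adjoinXHom hx ⟨Polynomial.X, J.X_mem_adjoinX⟩ = Polynomial.C x :=
  Polynomial.isRegular_X.left <| show Polynomial.X * _ = Polynomial.X * _ by
    rw [X_mul_adjoinXHom, mul_comm]

lemma adjoinXHom_C (u : R) (hu : Polynomial.C u ∈ J.adjoinX) :
    adjoinXHom hx ⟨Polynomial.C u, hu⟩ = 0 := by
  simp [adjoinXHom]

lemma mem_span_subtype_adjoinXHom (hann : ∀ y, (∀ u ∈ J, u * y = 0) → y ∈ span {x})
    (f : J.adjoinX →ₗ[R[X]] R[X]) :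
    f ∈ Submodule.span R[X] {J.adjoinX.subtype, adjoinXHom hx} := by
  set a := f ⟨Polynomial.X, J.X_mem_adjoinX⟩
  have ha : ∀ u ∈ J, u * a.coeff 0 = 0 := fun u hu => by
    have hC : Polynomial.C u ∈ J.adjoinX := subset_span (Or.inl ⟨u, hu, rfl⟩)
    simpa using congrArg (Polynomial.coeff · 0)
      (coe_mul_apply_comm f ⟨Polynomial.X, J.X_mem_adjoinX⟩ ⟨_, hC⟩).symm
  obtain ⟨w, hw⟩ := mem_span_singleton'.mp (hann _ ha)
  have hf : f = a.divX • J.adjoinX.subtype + Polynomial.C w • adjoinXHom hx := by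
    refine J.adjoinX_hom_ext ?_
    simp only [LinearMap.add_apply, LinearMap.smul_apply, Submodule.subtype_apply,
      smul_eq_mul, adjoinXHom_X, ← Polynomial.C_mul, hw, Polynomial.divX_mul_X_add]
    rfl
  rw [hf]
  exact add_mem (Submodule.smul_mem _ _ (Submodule.subset_span (by simp)))
    (Submodule.smul_mem _ _ (Submodule.subset_span (by simp)))

end Ideal

section StanleyReisner

noncomputable def sqfreeExp {ι : Type*} (ρ : Finset ι) : ι →₀ ℕ :=
  ∑ i ∈ ρ, Finsupp.single i 1

lemma sqfreeExp_apply {ι : Type*} [DecidableEq ι] (ρ : Finset ι) (i : ι) :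
    sqfreeExp ρ i = if i ∈ ρ then 1 else 0 := by
  simp [sqfreeExp, Finsupp.finsetSum_apply, Finsupp.single_apply]

lemma support_sqfreeExp {ι : Type*} (ρ : Finset ι) : (sqfreeExp ρ).support = ρ := by
  classical
  ext i
  by_cases hi : i ∈ ρ <;> simp [sqfreeExp_apply, hi]

lemma sqfreeExp_le_iff {ι : Type*} {ρ : Finset ι} {b : ι →₀ ℕ} :
    sqfreeExp ρ ≤ b ↔ ρ ⊆ b.support := by
  classical
  simp only [Finsupp.le_def, sqfreeExp_apply, Finset.subset_iff, Finsupp.mem_support_iff]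
  refine forall_congr' fun i => ?_
  split_ifs with hi <;> simp [hi, Nat.one_le_iff_ne_zero]

variable {k : Type*} [Field k] {m : ℕ} {Δ : Set (Finset (Fin m))}

lemma IsComplex.isLowerSet (hΔ : IsComplex Δ) : IsLowerSet Δ :=
  fun _ _ hts hs => hΔ.2 hs hts

lemma xmon_eq_monomial (ρ : Finset (Fin m)) : xmon k ρ = monomial (sqfreeExp ρ) 1 :=
  (monomial_sum_one ρ _).symm

lemma srIdeal_eq_span_monomial :
    srIdeal k Δ = Ideal.span ((fun b => monomial b (1 : k)) '' (sqfreeExp '' {ρ | ρ ∉ Δ})) := by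
  rw [srIdeal, Set.image_image]
  simp only [xmon_eq_monomial]

lemma monomial_mem_srIdeal {b : Fin m →₀ ℕ} (hb : b.support ∉ Δ) (c : k) :
    monomial b c ∈ srIdeal k Δ := by
  rw [srIdeal_eq_span_monomial, mem_ideal_span_monomial_image]
  exact fun b' hb' => ⟨sqfreeExp b.support, ⟨_, hb, rfl⟩,
    by rw [Finset.mem_singleton.1 (support_monomial_subset hb')]
       exact sqfreeExp_le_iff.2 subset_rfl⟩

lemma support_notMem_of_mem_srIdeal (hΔ : IsLowerSet Δ) {F : MvPolynomial (Fin m) k}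
    (hF : F ∈ srIdeal k Δ) {b : Fin m →₀ ℕ} (hb : b ∈ F.support) : b.support ∉ Δ := by
  rw [srIdeal_eq_span_monomial, mem_ideal_span_monomial_image] at hF
  obtain ⟨_, ⟨ρ, hρ, rfl⟩, hρb⟩ := hF b hb
  exact fun hbΔ => hρ (hΔ (sqfreeExp_le_iff.1 hρb) hbΔ)

lemma mem_Jσ_iff {σ : Finset (Fin m)} {u : SR k Δ} : u ∈ Jσ k Δ σ ↔ u * xcls k Δ σ = 0 := by
  rw [Jσ, Ideal.mem_colon_span_singleton, Ideal.mem_bot]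

lemma xcls_mem_Jσ {ρ σ : Finset (Fin m)} (h : ρ ∪ σ ∉ Δ) : xcls k Δ ρ ∈ Jσ k Δ σ := by
  classical
  rw [mem_Jσ_iff, xcls, xcls, ← map_mul, Ideal.Quotient.eq_zero_iff_mem, xmon_eq_monomial,
    xmon_eq_monomial, monomial_mul, one_mul]
  refine monomial_mem_srIdeal ?_ _
  rwa [Finsupp.support_add_eq_union, support_sqfreeExp, support_sqfreeExp]

end StanleyReisner

section Homology

variable {k : Type*} [Field k] {m : ℕ}

lemma faceSpan_eq_supported (L : Set (Finset (Fin m))) (c : ℕ) :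
    faceSpan k L c = Finsupp.supported k k {τ | τ.1 ∈ L} := by
  rw [Finsupp.supported_eq_span_single, faceSpan]
  congr 1
  ext x
  simp [eq_comm]

lemma sBdry_single_apply_erase {c : ℕ} {v : Fin m} {σ τ : {s : Finset (Fin m) // s.card = c}}
    (hvσ : v ∈ σ.1) (hvτ : v ∈ τ.1) :
    sBdry k m c (Finsupp.single σ 1) ⟨τ.1.erase v, by rw [Finset.card_erase_of_mem hvτ, τ.2]⟩
      = if σ = τ then (-1) ^ (τ.1.filter (· < v)).card else 0 := by
  have key : ∀ j, σ.1.erase j = τ.1.erase v ↔ j = v ∧ σ = τ := by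
    intro j
    constructor
    · intro h
      have hjv : j = v := by
        by_contra hjv
        have : v ∈ τ.1.erase v := h ▸ Finset.mem_erase.2 ⟨Ne.symm hjv, hvσ⟩
        exact Finset.notMem_erase v τ.1 this
      subst hjv
      refine ⟨rfl, Subtype.ext ?_⟩
      rw [← Finset.insert_erase hvσ, h, Finset.insert_erase hvτ]
    · rintro ⟨rfl, rfl⟩
      rfl
  rw [sBdry, Finsupp.lsum_single, LinearMap.toSpanSingleton_apply, one_smul,
    Finsupp.finsetSum_apply]
  split_ifs with h
  · subst h
    rw [Finset.sum_eq_single_of_mem ⟨v, hvσ⟩ (Finset.mem_attach _ _)]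
    · simp
    · rintro ⟨j, hj⟩ - hjv
      simp only [Finsupp.smul_apply, Finsupp.single_apply, Subtype.mk.injEq, key j]
      simp [Subtype.ext_iff.not.1 hjv]
  · refine Finset.sum_eq_zero fun ⟨j, hj⟩ _ => ?_
    simp only [Finsupp.smul_apply, Finsupp.single_apply, Subtype.mk.injEq, key j]
    simp [h]

lemma sCycles_eq_bot_of_forall_mem {L : Set (Finset (Fin m))} {c : ℕ} {v : Fin m}
    (hv : ∀ τ ∈ L, τ.card = c → v ∈ τ) : sCycles k L c = ⊥ := by
  refine eq_bot_iff.2 fun z hz => ?_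
  obtain ⟨hker, hface⟩ := Submodule.mem_inf.mp hz
  rw [faceSpan_eq_supported, Finsupp.mem_supported] at hface
  have hvz : ∀ σ ∈ z.support, v ∈ σ.1 := fun σ hσ => hv σ.1 (hface hσ) σ.2
  refine (Submodule.mem_bot k).2 (Finsupp.ext fun τ => by_contra fun hτ => ?_)
  have hτz : τ ∈ z.support := Finsupp.mem_support_iff.2 hτ
  have hbdry : sBdry k m c z ⟨τ.1.erase v, by rw [Finset.card_erase_of_mem (hvz τ hτz), τ.2]⟩
      = z τ * (-1) ^ (τ.1.filter (· < v)).card := by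
    conv_lhs => rw [← Finsupp.sum_single z]
    have hterm : ∀ σ ∈ z.support, sBdry k m c (Finsupp.single σ (z σ))
        ⟨τ.1.erase v, by rw [Finset.card_erase_of_mem (hvz τ hτz), τ.2]⟩
        = z σ * if σ = τ then (-1) ^ (τ.1.filter (· < v)).card else 0 := fun σ hσ => by
      rw [← Finsupp.smul_single_one, map_smul, Finsupp.smul_apply, smul_eq_mul,
        sBdry_single_apply_erase (hvz σ hσ) (hvz τ hτz)]
    rw [map_finsuppSum, Finsupp.sum_apply, Finsupp.sum, Finset.sum_congr rfl hterm]
    simp [hτz]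
  rw [LinearMap.mem_ker.1 hker] at hbdry
  exact mul_ne_zero hτ (pow_ne_zero _ (neg_ne_zero.2 one_ne_zero)) hbdry.symm

lemma subsingleton_redHomology_topCard_of_cone {L : Set (Finset (Fin m))} {v : Fin m}
    (hv : ∀ α ∈ L, insert v α ∈ L) :
    Subsingleton (redHomology k L (topCard L)) := by
  have hle : ∀ α ∈ L, α.card ≤ topCard L := fun α hα =>
    le_csSup (Set.toFinite _).bddAbove ⟨α, hα, rfl⟩
  have hmem : ∀ α ∈ L, α.card = topCard L → v ∈ α := fun α hα hc => by
    by_contra hvα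
    have := hle _ (hv α hα)
    rw [Finset.card_insert_of_notMem hvα] at this
    omega
  have : Subsingleton (sCycles k L (topCard L)) :=
    Submodule.subsingleton_iff_eq_bot.2 (sCycles_eq_bot_of_forall_mem hmem)
  unfold redHomology
  exact (Submodule.Quotient.mk_surjective _).subsingleton

end Homology

namespace IsGorensteinStar

variable {k : Type*} [Field k] {m : ℕ} {Δ : Set (Finset (Fin m))}

lemma not_subsingleton_redHomology (hG : IsGorensteinStar k Δ) {τ : Finset (Fin m)}
    (hτ : τ ∈ Δ) : ¬ Subsingleton (redHomology k (link Δ τ) (topCard (link Δ τ))) := by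
  intro h
  have := hG τ hτ (topCard (link Δ τ))
  rw [if_pos rfl, rank_subsingleton'] at this
  exact zero_ne_one this

/-- A vertex `v ∈ σ \ τ` would be a cone point of `lk τ`, killing its top homology. -/
lemma subset_of_forall_union_mem (hG : IsGorensteinStar k Δ) (hΔ : IsLowerSet Δ)
    {σ τ : Finset (Fin m)} (hτ : τ ∈ Δ) (H : ∀ ρ, ρ ∪ τ ∈ Δ → ρ ∪ σ ∈ Δ) : σ ⊆ τ := by
  intro v hvσ
  by_contra hvτ
  refine hG.not_subsingleton_redHomology hτ
    (subsingleton_redHomology_topCard_of_cone (v := v) ?_)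
  rintro α ⟨hατ, hα⟩
  have hcone : α ∪ τ ∪ σ ∈ Δ := H (α ∪ τ) (by rwa [Finset.union_assoc, Finset.union_self])
  refine ⟨Finset.disjoint_insert_left.2 ⟨hvτ, hατ⟩, hΔ ?_ hcone⟩
  rw [Finset.insert_union]
  exact Finset.insert_subset (Finset.mem_union_right _ hvσ) Finset.subset_union_left

lemma mem_span_xcls_of_forall_mul_eq_zero (hG : IsGorensteinStar k Δ) (hΔ : IsLowerSet Δ)
    {σ : Finset (Fin m)} {y : SR k Δ} (hy : ∀ u ∈ Jσ k Δ σ, u * y = 0) :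
    y ∈ Ideal.span {xcls k Δ σ} := by
  classical
  obtain ⟨Y, rfl⟩ := Ideal.Quotient.mk_surjective y
  rw [← Y.support_sum_monomial_coeff, map_sum]
  refine Submodule.sum_mem _ fun b hb => ?_
  by_cases hbΔ : b.support ∈ Δ
  · have hσb : σ ⊆ b.support := hG.subset_of_forall_union_mem hΔ hbΔ fun ρ hρ => by
      by_contra hρσ
      have h0 := hy _ (xcls_mem_Jσ hρσ)
      rw [xcls, ← map_mul, Ideal.Quotient.eq_zero_iff_mem, xmon_eq_monomial] at h0
      refine support_notMem_of_mem_srIdeal hΔ h0 (b := sqfreeExp ρ + b) ?_ ?_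
      · rw [mem_support_iff, coeff_monomial_mul, one_mul]
        exact mem_support_iff.1 hb
      · rwa [Finsupp.support_add_eq_union, support_sqfreeExp]
    have hfac : monomial b (Y.coeff b) = monomial (b - sqfreeExp σ) (Y.coeff b) * xmon k σ := by
      rw [xmon_eq_monomial, monomial_mul, mul_one,
        tsub_add_cancel_of_le (sqfreeExp_le_iff.2 hσb)]
    rw [hfac, map_mul]
    exact Ideal.mul_mem_left _ _ (Ideal.mem_span_singleton_self _)
  · rw [Ideal.Quotient.eq_zero_iff_mem.2 (monomial_mem_srIdeal hbΔ _)]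
    exact zero_mem _

end IsGorensteinStar

theorem hom_module_generated_by_inclusion_and_phi_general (k : Type*) [Field k] {m : ℕ}
    (Δ : Set (Finset (Fin m))) (hΔ : IsComplex Δ) (hG : IsGorensteinStar k Δ)
    (σ : Finset (Fin m)) :
    (∃! φ : (JzIdeal k Δ σ) →ₗ[Polynomial (SR k Δ)] Polynomial (SR k Δ),
        φ ⟨Polynomial.X, X_mem_JzIdeal k Δ σ⟩ = Polynomial.C (xcls k Δ σ) ∧
        ∀ u : SR k Δ, ∀ hu : u ∈ Jσ k Δ σ,
          φ ⟨Polynomial.C u, C_mem_JzIdeal k Δ σ u hu⟩ = 0) ∧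
    ∀ φ : (JzIdeal k Δ σ) →ₗ[Polynomial (SR k Δ)] Polynomial (SR k Δ),
      (φ ⟨Polynomial.X, X_mem_JzIdeal k Δ σ⟩ = Polynomial.C (xcls k Δ σ) ∧
        ∀ u : SR k Δ, ∀ hu : u ∈ Jσ k Δ σ,
          φ ⟨Polynomial.C u, C_mem_JzIdeal k Δ σ u hu⟩ = 0) →
      ∀ f : (JzIdeal k Δ σ) →ₗ[Polynomial (SR k Δ)] Polynomial (SR k Δ),
        letI : SMulCommClass (Polynomial (SR k Δ)) (Polynomial (SR k Δ)) (Polynomial (SR k Δ)) :=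
          @Algebra.to_smulCommClass (Polynomial (SR k Δ)) (Polynomial (SR k Δ)) _ _ _
        f ∈ Submodule.span (Polynomial (SR k Δ)) {(JzIdeal k Δ σ).subtype, φ} := by
  have hx : ∀ u ∈ Jσ k Δ σ, u * xcls k Δ σ = 0 := fun _ => mem_Jσ_iff.1
  have hφ : ∀ φ : JzIdeal k Δ σ →ₗ[Polynomial (SR k Δ)] Polynomial (SR k Δ),
      φ ⟨Polynomial.X, X_mem_JzIdeal k Δ σ⟩ = Polynomial.C (xcls k Δ σ) →
        φ = Ideal.adjoinXHom hx := fun φ h =>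
    Ideal.adjoinX_hom_ext _ (h.trans (Ideal.adjoinXHom_X hx).symm)
  refine ⟨⟨Ideal.adjoinXHom hx, ⟨Ideal.adjoinXHom_X hx, fun u hu => Ideal.adjoinXHom_C hx u _⟩,
    fun φ h => hφ φ h.1⟩, ?_⟩
  rintro φ ⟨hφX, -⟩ f
  rw [hφ φ hφX]
  exact Ideal.mem_span_subtype_adjoinXHom hx
    (fun _ => hG.mem_span_xcls_of_forall_mul_eq_zero hΔ.isLowerSet) f

/-- `M = Hom_{k[Δ][z]}((J_σ, z), k[Δ][z])` is generated as a `k[Δ][z]`-module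
by the inclusion `i` and the (unique) homomorphism `φ_σ` with `φ_σ(z) = x_σ` and
`φ_σ(u) = 0` for `u ∈ J_σ`. -/
theorem hom_module_generated_by_inclusion_and_phi (k : Type*) [Field k] {m : ℕ}
    (Δ : Set (Finset (Fin m))) (hΔ : IsComplex Δ) (hG : IsGorensteinStar k Δ)
    (σ : Finset (Fin m)) (hσ : σ ∈ Δ) (hcard : 2 ≤ σ.card) :
    (∃! φ : (JzIdeal k Δ σ) →ₗ[Polynomial (SR k Δ)] Polynomial (SR k Δ),
        φ ⟨Polynomial.X, X_mem_JzIdeal k Δ σ⟩ = Polynomial.C (xcls k Δ σ) ∧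
        ∀ u : SR k Δ, ∀ hu : u ∈ Jσ k Δ σ,
          φ ⟨Polynomial.C u, C_mem_JzIdeal k Δ σ u hu⟩ = 0) ∧
    ∀ φ : (JzIdeal k Δ σ) →ₗ[Polynomial (SR k Δ)] Polynomial (SR k Δ),
      (φ ⟨Polynomial.X, X_mem_JzIdeal k Δ σ⟩ = Polynomial.C (xcls k Δ σ) ∧
        ∀ u : SR k Δ, ∀ hu : u ∈ Jσ k Δ σ,
          φ ⟨Polynomial.C u, C_mem_JzIdeal k Δ σ u hu⟩ = 0) →
      ∀ f : (JzIdeal k Δ σ) →ₗ[Polynomial (SR k Δ)] Polynomial (SR k Δ),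
        letI : SMulCommClass (Polynomial (SR k Δ)) (Polynomial (SR k Δ)) (Polynomial (SR k Δ)) :=
          @Algebra.to_smulCommClass (Polynomial (SR k Δ)) (Polynomial (SR k Δ)) _ _ _
        f ∈ Submodule.span (Polynomial (SR k Δ)) {(JzIdeal k Δ σ).subtype, φ} :=
  hom_module_generated_by_inclusion_and_phi_general k Δ hΔ hG σ
end

section
/- Let Δ be a Gorenstein* simplicial complex on {1,...,m} and σ ∈ Δ a face of dimension d−1, d ≥ 2, with J_σ = (0:x_σ) generated by monomials u₁,...,u_r. Let S = k[x₁,...,x_{m+1},z]/(I_Δ, x_{m+1}z − x_σ, x_{m+1}u₁, ..., x_{m+1}u_r). Then z is an S-regular element and S/(z) is isomorphic as a k-algebra to the Stanley–Reisner ring k[Δ_σ] of the stellar subdivision of Δ on σ. -/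
set_option synthInstance.maxHeartbeats 1000000
set_option maxHeartbeats 1000000

open MvPolynomial
/-- The stellar subdivision of `Δ` on `σ`, a complex on `{1, …, m+1}` with new vertex
`m+1` (modeled as `Fin.last m`). -/
def stellar {m : ℕ} (Δ : Set (Finset (Fin m))) (σ : Finset (Fin m)) :
    Set (Finset (Fin (m + 1))) :=
  ((fun τ : Finset (Fin m) => τ.image Fin.castSucc) '' {τ ∈ Δ | ¬ σ ⊆ τ}) ∪
  ((fun τ : Finset (Fin m) => insert (Fin.last m) (τ.image Fin.castSucc)) ''
    {τ | τ ∈ Δ ∧ ¬ σ ⊆ τ ∧ τ ∪ σ ∈ Δ})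

/-- The defining ideal of the Kustin–Miller unprojection ring
`S = k[x₁,…,x_{m+1},z]/(I_Δ, x_{m+1}z − x_σ, x_{m+1}u₁, …, x_{m+1}u_r)`.
Here the ambient ring is `k[x₁,…,x_{m+2}]` with `x_{m+1}` the unprojection variable and
`x_{m+2}` playing the role of `z`. -/
noncomputable def unprojIdeal (k : Type*) [Field k] {m : ℕ} (Δ : Set (Finset (Fin m)))
    (σ : Finset (Fin m)) (U : Set (MvPolynomial (Fin m) k)) :
    Ideal (MvPolynomial (Fin (m + 2)) k) :=
  (srIdeal k Δ).map
      (MvPolynomial.rename (fun i : Fin m => i.castSucc.castSucc)).toRingHom ⊔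
  Ideal.span {X ((Fin.last m).castSucc) * X (Fin.last (m + 1)) -
      MvPolynomial.rename (fun i : Fin m => i.castSucc.castSucc) (xmon k σ)} ⊔
  Ideal.span ((fun u => X ((Fin.last m).castSucc) *
      MvPolynomial.rename (fun i : Fin m => i.castSucc.castSucc) u) '' U)


/-!
Reduce the monomials of `k[x₁, …, x_{m+1}, z]` by the rules `x_τ ↦ 0` for `τ ∉ Δ`,
`x_{m+1} u ↦ 0` for `u ∈ U` and `x_σ ↦ x_{m+1} z`; the last rule lowers the degree in
`x₁, …, x_m`, so reduction terminates. The one overlap to check is `x_τ x_{m+1} z` against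
`x_τ x_σ` for a face `τ`: if `τ ∪ σ ∈ Δ` the second reduces to the first, and otherwise
`x_τ ∈ (0 : x_σ)` is a multiple of some `u ∈ U`, so both reduce to `0`. The normal form is
therefore a `k`-linear retraction onto the span of the irreducible monomials which vanishes on
the ideal, and since `z` times an irreducible monomial is irreducible, `z` is regular.

Setting `z = 0` maps the ideal onto `(I_Δ, x_σ, x_{m+1} u₁, …, x_{m+1} u_r)`. This is the
Stanley–Reisner ideal of `Δ_σ`: besides the non-faces of `Δ` and the sets containing `σ`, the
non-faces of `Δ_σ` are the `τ ∪ {m+1}` with `τ ∪ σ ∉ Δ`, that is, with `x_τ ∈ J_σ`.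
-/

open MvPolynomial

namespace StellarUnprojection

lemma eq_zero_of_mem_span_of_mul_eq_zero {R M : Type*} [CommRing R] [AddCommGroup M]
    (N : R →+ M) {G : Set R} (hG : ∀ p, ∀ g ∈ G, N (p * g) = 0) {f : R}
    (hf : f ∈ Ideal.span G) : N f = 0 := by
  suffices ∀ p, N (p * f) = 0 by simpa using this 1
  induction hf using Submodule.span_induction with
  | mem g hg => exact fun p => hG p g hg
  | zero => simp
  | add x y _ _ hx hy => intro p; rw [mul_add, map_add, hx, hy, add_zero]
  | smul a x _ hx => intro p; rw [smul_eq_mul, ← mul_assoc]; exact hx (p * a)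

lemma eq_zero_of_mk_mul_eq_zero_of_normalForm {R : Type*} [CommRing R] {I : Ideal R}
    {V : Set R} (N : R →+ R) (hNI : ∀ p ∈ I, N p = 0) (hN : ∀ p, N p - p ∈ I)
    (hNV : ∀ p, N p ∈ V) (hV : ∀ p ∈ V, N p = p) {z : R} (hz : IsLeftRegular z)
    (hzV : ∀ p ∈ V, z * p ∈ V)
    (s : R ⧸ I) (hs : Ideal.Quotient.mk I z * s = 0) : s = 0 := by
  obtain ⟨f, rfl⟩ := Ideal.Quotient.mk_surjective s
  rw [← map_mul, Ideal.Quotient.eq_zero_iff_mem] at hs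
  have hzb : z * N f ∈ I := by
    simpa [mul_sub] using I.add_mem (I.mul_mem_left z (hN f)) hs
  have hb : N f = 0 :=
    hz (show z * N f = z * 0 by rw [mul_zero, ← hV _ (hzV _ (hNV f)), hNI _ hzb])
  rw [Ideal.Quotient.eq_zero_iff_mem]
  simpa [hb] using hN f

noncomputable def quotientSpanMkAlgEquivOfKerEq {R A B : Type*} [CommRing R] [CommRing A]
    [CommRing B] [Algebra R A] [Algebra R B] (φ : A →ₐ[R] B) (hφ : Function.Surjective φ)
    (I : Ideal A) {z : A} (hker : RingHom.ker φ = Ideal.span {z}) :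
    ((A ⧸ I) ⧸ Ideal.span {Ideal.Quotient.mk I z}) ≃ₐ[R] B ⧸ I.map φ :=
  have hz : Ideal.span {Ideal.Quotient.mk I z} = (Ideal.span {z}).map (Ideal.Quotient.mkₐ R I) := by
    rw [Ideal.map_span, Set.image_singleton, Ideal.Quotient.mkₐ_eq_mk]
  have hψ : Function.Surjective ((Ideal.Quotient.mkₐ R (I.map φ)).comp φ) :=
    (Ideal.Quotient.mkₐ_surjective R _).comp hφ
  have hkerψ : I ⊔ Ideal.span {z} = RingHom.ker ((Ideal.Quotient.mkₐ R (I.map φ)).comp φ) := by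
    ext x
    rw [← hker, RingHom.mem_ker, AlgHom.comp_apply, Ideal.Quotient.mkₐ_eq_mk,
      Ideal.Quotient.eq_zero_iff_mem, ← Ideal.mem_comap, Ideal.comap_map_of_surjective _ hφ,
      RingHom.ker_eq_comap_bot]
  (Ideal.quotientEquivAlgOfEq R hz).trans <| (DoubleQuot.quotQuotEquivQuotSupₐ R I _).trans <|
    (Ideal.quotientEquivAlgOfEq R hkerψ).trans (Ideal.quotientKerAlgEquivOfSurjective hψ)

lemma smul_monomial_one {ι R : Type*} [CommSemiring R] (s : ι →₀ ℕ) (c : R) :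
    c • monomial s (1 : R) = monomial s c := by
  rw [smul_monomial, smul_eq_mul, mul_one]

section SqfreeExp

variable {α : Type*} [DecidableEq α]

noncomputable def sqfreeExp (ρ : Finset α) : α →₀ ℕ := ∑ i ∈ ρ, Finsupp.single i 1

lemma sqfreeExp_apply (ρ : Finset α) (j : α) : sqfreeExp ρ j = if j ∈ ρ then 1 else 0 := by
  simp [sqfreeExp, Finsupp.finsetSum_apply, Finsupp.single_apply]

@[simp] lemma support_sqfreeExp (ρ : Finset α) : (sqfreeExp ρ).support = ρ := by
  ext i; simp [sqfreeExp_apply]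

lemma sqfreeExp_le_iff {ρ : Finset α} {t : α →₀ ℕ} : sqfreeExp ρ ≤ t ↔ ρ ⊆ t.support := by
  simp only [Finsupp.le_def, sqfreeExp_apply, Finset.subset_iff, Finsupp.mem_support_iff]
  refine ⟨fun h i hi => ?_, fun h i => ?_⟩
  · simpa [hi, Nat.one_le_iff_ne_zero] using h i
  · split_ifs with hi
    · exact Nat.one_le_iff_ne_zero.mpr (h hi)
    · exact Nat.zero_le _

lemma sqfreeExp_support_le (t : α →₀ ℕ) : sqfreeExp t.support ≤ t :=
  sqfreeExp_le_iff.mpr subset_rfl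

end SqfreeExp

section StanleyReisner

variable {k : Type*} [Field k] {m : ℕ} {Δ : Set (Finset (Fin m))}

lemma xmon_eq_monomial (ρ : Finset (Fin m)) : xmon k ρ = monomial (sqfreeExp ρ) 1 := by
  simp [xmon, sqfreeExp, monomial_sum_one, X]

lemma xmon_dvd_xmon {ρ τ : Finset (Fin m)} (h : ρ ⊆ τ) : xmon k ρ ∣ xmon k τ :=
  Finset.prod_dvd_prod_of_subset _ _ _ h

lemma xmon_support_dvd_monomial (t : Fin m →₀ ℕ) : xmon k t.support ∣ monomial t 1 := by
  rw [xmon_eq_monomial, monomial_dvd_monomial]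
  exact ⟨Or.inr (sqfreeExp_support_le t), one_dvd _⟩

lemma xmon_mem_srIdeal {ρ : Finset (Fin m)} (hρ : ρ ∉ Δ) : xmon k ρ ∈ srIdeal k Δ :=
  Ideal.subset_span (Set.mem_image_of_mem _ hρ)

lemma srIdeal_eq_span_monomial (Δ : Set (Finset (Fin m))) :
    srIdeal k Δ = Ideal.span ((fun s => monomial s (1 : k)) '' (sqfreeExp '' {ρ | ρ ∉ Δ})) := by
  simp only [srIdeal, Set.image_image, xmon_eq_monomial]

lemma monomial_mem_srIdeal_iff (hΔ : IsComplex Δ) {t : Fin m →₀ ℕ} {c : k} (hc : c ≠ 0) :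
    monomial t c ∈ srIdeal k Δ ↔ t.support ∉ Δ := by
  classical
  rw [srIdeal_eq_span_monomial, mem_ideal_span_monomial_image, support_monomial, if_neg hc]
  simp only [Finset.mem_singleton, forall_eq, Set.exists_mem_image, Set.mem_ofPred_eq,
    sqfreeExp_le_iff]
  exact ⟨fun ⟨ρ, hρ, hsub⟩ hface => hρ (hΔ.2 hface hsub), fun h => ⟨_, h, subset_rfl⟩⟩

lemma mk_monomial_mem_Jσ_iff (hΔ : IsComplex Δ) {σ : Finset (Fin m)} {t : Fin m →₀ ℕ} :
    Ideal.Quotient.mk (srIdeal k Δ) (monomial t 1) ∈ Jσ k Δ σ ↔ t.support ∪ σ ∉ Δ := by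
  rw [Jσ, Ideal.mem_colon_span_singleton, xcls, ← map_mul, Ideal.mem_bot,
    Ideal.Quotient.eq_zero_iff_mem, xmon_eq_monomial, monomial_mul, mul_one,
    monomial_mem_srIdeal_iff hΔ one_ne_zero, Finsupp.support_add_eq_union, support_sqfreeExp]

end StanleyReisner

section Annihilator

variable {k : Type*} [Field k] {m : ℕ} {Δ : Set (Finset (Fin m))} {σ : Finset (Fin m)}
  {U : Set (MvPolynomial (Fin m) k)}

def annExps (U : Set (MvPolynomial (Fin m) k)) : Set (Fin m →₀ ℕ) := {s | monomial s 1 ∈ U}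

lemma eq_image_annExps (hUmon : ∀ p ∈ U, ∃ s : Fin m →₀ ℕ, p = monomial s 1) :
    U = (fun s => monomial s (1 : k)) '' annExps U := by
  ext u
  refine ⟨fun hu => ?_, fun ⟨s, hs, hsu⟩ => hsu ▸ hs⟩
  obtain ⟨s, rfl⟩ := hUmon u hu
  exact ⟨s, hu, rfl⟩

lemma support_union_not_mem_of_mem_annExps (hΔ : IsComplex Δ)
    (hU : Ideal.span (Ideal.Quotient.mk (srIdeal k Δ) '' U) = Jσ k Δ σ) {s : Fin m →₀ ℕ}
    (hs : s ∈ annExps U) : s.support ∪ σ ∉ Δ := by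
  rw [← mk_monomial_mem_Jσ_iff (k := k) hΔ, ← hU]
  exact Ideal.subset_span (Set.mem_image_of_mem _ hs)

lemma exists_mem_annExps_le (hΔ : IsComplex Δ)
    (hU : Ideal.span (Ideal.Quotient.mk (srIdeal k Δ) '' U) = Jσ k Δ σ)
    (hUmon : ∀ p ∈ U, ∃ s : Fin m →₀ ℕ, p = monomial s 1) {t : Fin m →₀ ℕ}
    (hface : t.support ∈ Δ) (hunion : t.support ∪ σ ∉ Δ) : ∃ s ∈ annExps U, s ≤ t := by
  classical
  have hJ := (mk_monomial_mem_Jσ_iff hΔ (k := k)).mpr hunion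
  -- `span U ⊔ I_Δ` is a monomial ideal, so one of its generators divides `x^t`
  rw [← hU, ← Ideal.map_span, Ideal.mem_quotient_iff_mem_sup, srIdeal_eq_span_monomial,
    eq_image_annExps hUmon, ← Ideal.span_union, ← Set.image_union,
    mem_ideal_span_monomial_image, support_monomial, if_neg one_ne_zero] at hJ
  obtain ⟨s, hs | ⟨ρ, hρ, rfl⟩, hle⟩ := hJ t (Finset.mem_singleton_self t)
  · exact ⟨s, hs, hle⟩
  · exact absurd (hΔ.2 hface (sqfreeExp_le_iff.mp hle)) hρ

end Annihilator

section Exponents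

variable {m : ℕ}

def oldVar (i : Fin m) : Fin (m + 2) := i.castSucc.castSucc

def newVar : Fin (m + 2) := (Fin.last m).castSucc

def zVar : Fin (m + 2) := Fin.last (m + 1)

lemma oldVar_injective : Function.Injective (oldVar (m := m)) :=
  (Fin.castSucc_injective _).comp (Fin.castSucc_injective _)

lemma oldVar_ne_newVar (i : Fin m) : oldVar i ≠ newVar :=
  fun h => (Fin.castSucc_lt_last i).ne (Fin.castSucc_injective _ h)

lemma oldVar_ne_zVar (i : Fin m) : oldVar i ≠ zVar := (Fin.castSucc_lt_last _).ne

lemma newVar_ne_zVar : (newVar : Fin (m + 2)) ≠ zVar := (Fin.castSucc_lt_last _).ne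

lemma eq_oldVar_or_newVar_or_zVar (j : Fin (m + 2)) :
    (∃ i, j = oldVar i) ∨ j = newVar ∨ j = zVar := by
  induction j using Fin.lastCases with
  | last => exact Or.inr (Or.inr rfl)
  | cast j =>
    induction j using Fin.lastCases with
    | last => exact Or.inr (Or.inl rfl)
    | cast i => exact Or.inl ⟨i, rfl⟩

noncomputable def oldPart : (Fin (m + 2) →₀ ℕ) →+ (Fin m →₀ ℕ) :=
  Finsupp.comapDomain.addMonoidHom oldVar_injective

@[simp] lemma oldPart_apply (s : Fin (m + 2) →₀ ℕ) (i : Fin m) : oldPart s i = s (oldVar i) :=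
  rfl

@[simp] lemma oldPart_mapDomain_oldVar (t : Fin m →₀ ℕ) :
    oldPart (Finsupp.mapDomain oldVar t) = t :=
  Finsupp.comapDomain_mapDomain _ oldVar_injective t

@[simp] lemma oldPart_single_newVar (c : ℕ) : oldPart (Finsupp.single (newVar (m := m)) c) = 0 := by
  ext i; simp [(oldVar_ne_newVar i).symm]

@[simp] lemma oldPart_single_zVar (c : ℕ) : oldPart (Finsupp.single (zVar (m := m)) c) = 0 := by
  ext i; simp [(oldVar_ne_zVar i).symm]

@[simp] lemma mapDomain_oldVar_apply_oldVar (t : Fin m →₀ ℕ) (i : Fin m) :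
    Finsupp.mapDomain oldVar t (oldVar i) = t i :=
  Finsupp.mapDomain_apply oldVar_injective t i

@[simp] lemma mapDomain_oldVar_apply_newVar (t : Fin m →₀ ℕ) :
    Finsupp.mapDomain oldVar t newVar = 0 :=
  Finsupp.mapDomain_of_notMem_range _ _ fun ⟨i, hi⟩ => oldVar_ne_newVar i hi

@[simp] lemma mapDomain_oldVar_apply_zVar (t : Fin m →₀ ℕ) :
    Finsupp.mapDomain oldVar t zVar = 0 :=
  Finsupp.mapDomain_of_notMem_range _ _ fun ⟨i, hi⟩ => oldVar_ne_zVar i hi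

lemma mapDomain_oldVar_le_iff {t : Fin m →₀ ℕ} {s : Fin (m + 2) →₀ ℕ} :
    Finsupp.mapDomain oldVar t ≤ s ↔ t ≤ oldPart s := by
  simp only [Finsupp.le_def]
  refine ⟨fun h i => by simpa using h (oldVar i), fun h j => ?_⟩
  rcases eq_oldVar_or_newVar_or_zVar j with ⟨i, rfl⟩ | rfl | rfl
  · simpa using h i
  all_goals simp

/-- The exponent of `x^s x_{m+1} z / x_σ`, i.e. one use of the relation `x_σ = x_{m+1} z`. -/
noncomputable def reduceStep (σ : Finset (Fin m)) (s : Fin (m + 2) →₀ ℕ) : Fin (m + 2) →₀ ℕ :=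
  s - Finsupp.mapDomain oldVar (sqfreeExp σ) + Finsupp.single newVar 1 + Finsupp.single zVar 1

lemma oldPart_reduceStep (σ : Finset (Fin m)) (s : Fin (m + 2) →₀ ℕ) :
    oldPart (reduceStep σ s) = oldPart s - sqfreeExp σ := by
  ext i
  simp [reduceStep]

lemma degree_oldPart_reduceStep_lt {σ : Finset (Fin m)} (hne : σ.Nonempty)
    {s : Fin (m + 2) →₀ ℕ} (h : σ ⊆ (oldPart s).support) :
    (oldPart (reduceStep σ s)).degree < (oldPart s).degree := by
  have hsplit := congrArg Finsupp.degree (tsub_add_cancel_of_le (sqfreeExp_le_iff.mpr h))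
  have hpos : (sqfreeExp σ).degree ≠ 0 := by
    rw [Ne, Finsupp.degree_eq_zero_iff, ← Finsupp.support_eq_empty, support_sqfreeExp]
    exact hne.ne_empty
  rw [map_add] at hsplit
  rw [oldPart_reduceStep]
  omega

end Exponents

section UnprojIdeal

variable {k : Type*} [Field k] {m : ℕ} {Δ : Set (Finset (Fin m))} {σ : Finset (Fin m)}
  {U : Set (MvPolynomial (Fin m) k)}

variable (Δ σ U) in
def unprojGens : Set (MvPolynomial (Fin (m + 2)) k) :=
  rename oldVar '' (xmon k '' {ρ | ρ ∉ Δ}) ∪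
    ({X newVar * X zVar - rename oldVar (xmon k σ)} ∪ (fun u => X newVar * rename oldVar u) '' U)

lemma unprojIdeal_eq_span : unprojIdeal k Δ σ U = Ideal.span (unprojGens Δ σ U) := by
  rw [unprojIdeal, srIdeal, Ideal.map_span, unprojGens, Ideal.span_union, Ideal.span_union,
    sup_assoc]
  rfl

lemma rename_xmon_mem_unprojIdeal {ρ : Finset (Fin m)} (hρ : ρ ∉ Δ) :
    rename oldVar (xmon k ρ) ∈ unprojIdeal k Δ σ U := by
  rw [unprojIdeal_eq_span]
  exact Ideal.subset_span (Or.inl ⟨_, ⟨ρ, hρ, rfl⟩, rfl⟩)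

lemma relation_mem_unprojIdeal :
    X newVar * X zVar - rename oldVar (xmon k σ) ∈ unprojIdeal k Δ σ U := by
  rw [unprojIdeal_eq_span]
  exact Ideal.subset_span (Or.inr (Or.inl rfl))

lemma X_newVar_mul_rename_mem_unprojIdeal {u : MvPolynomial (Fin m) k} (hu : u ∈ U) :
    X newVar * rename oldVar u ∈ unprojIdeal k Δ σ U := by
  rw [unprojIdeal_eq_span]
  exact Ideal.subset_span (Or.inr (Or.inr ⟨u, hu, rfl⟩))

lemma rename_oldVar_monomial (t : Fin m →₀ ℕ) (c : k) :
    rename oldVar (monomial t c) = monomial (Finsupp.mapDomain oldVar t) c :=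
  rename_monomial _ _ _

lemma X_newVar_mul_X_zVar : (X newVar * X zVar : MvPolynomial (Fin (m + 2)) k) =
    monomial (Finsupp.single newVar 1 + Finsupp.single zVar 1) 1 := by
  rw [X, X, monomial_mul, one_mul]

lemma monomial_mem_unprojIdeal_of_not_mem {s : Fin (m + 2) →₀ ℕ}
    (h : (oldPart s).support ∉ Δ) (c : k) : monomial s c ∈ unprojIdeal k Δ σ U := by
  refine Ideal.mem_of_dvd _ ?_ (rename_xmon_mem_unprojIdeal h)
  rw [xmon_eq_monomial, rename_oldVar_monomial, monomial_dvd_monomial, mapDomain_oldVar_le_iff]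
  exact ⟨Or.inr (sqfreeExp_support_le _), one_dvd _⟩

variable (U) in
/-- `x^s` is a multiple of `x_{m+1} u` for some `u ∈ U`. -/
def IsAnnMultiple (s : Fin (m + 2) →₀ ℕ) : Prop :=
  s newVar ≠ 0 ∧ ∃ t ∈ annExps U, t ≤ oldPart s

lemma monomial_mem_unprojIdeal_of_isAnnMultiple {s : Fin (m + 2) →₀ ℕ}
    (h : IsAnnMultiple U s) (c : k) : monomial s c ∈ unprojIdeal k Δ σ U := by
  obtain ⟨hnew, t, ht, hle⟩ := h
  refine Ideal.mem_of_dvd _ ?_ (X_newVar_mul_rename_mem_unprojIdeal ht)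
  rw [rename_oldVar_monomial, X, monomial_mul, one_mul, monomial_dvd_monomial]
  refine ⟨Or.inr fun j => ?_, one_dvd _⟩
  rcases eq_oldVar_or_newVar_or_zVar j with ⟨i, rfl⟩ | rfl | rfl
  · simpa [(oldVar_ne_newVar i).symm] using hle i
  · simpa [Nat.one_le_iff_ne_zero] using hnew
  · simp [newVar_ne_zVar]

lemma monomial_reduceStep_sub_mem_unprojIdeal {s : Fin (m + 2) →₀ ℕ}
    (h : σ ⊆ (oldPart s).support) (c : k) :
    monomial (reduceStep σ s) c - monomial s c ∈ unprojIdeal k Δ σ U := by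
  have hle : Finsupp.mapDomain oldVar (sqfreeExp σ) ≤ s :=
    mapDomain_oldVar_le_iff.mpr (sqfreeExp_le_iff.mpr h)
  convert Ideal.mul_mem_left _ (monomial (s - Finsupp.mapDomain oldVar (sqfreeExp σ)) c)
    (relation_mem_unprojIdeal (k := k) (Δ := Δ) (σ := σ) (U := U)) using 1
  rw [mul_sub, X_newVar_mul_X_zVar, xmon_eq_monomial, rename_oldVar_monomial, monomial_mul,
    monomial_mul, mul_one, tsub_add_cancel_of_le hle, reduceStep, add_assoc]

end UnprojIdeal

section NormalForm

variable {k : Type*} [Field k] {m : ℕ} (Δ : Set (Finset (Fin m))) (σ : Finset (Fin m))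
  (U : Set (MvPolynomial (Fin m) k))

def IsStandard (s : Fin (m + 2) →₀ ℕ) : Prop :=
  (oldPart s).support ∈ Δ ∧ ¬IsAnnMultiple U s ∧ ¬σ ⊆ (oldPart s).support

noncomputable def standardSpan : Submodule k (MvPolynomial (Fin (m + 2)) k) :=
  Submodule.span k ((fun s => monomial s 1) '' {s | IsStandard Δ σ U s})

open Classical in
noncomputable def nfMon (hne : σ.Nonempty) (s : Fin (m + 2) →₀ ℕ) :
    MvPolynomial (Fin (m + 2)) k :=
  if (oldPart s).support ∉ Δ then 0
  else if IsAnnMultiple U s then 0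
  else if _ : σ ⊆ (oldPart s).support then nfMon hne (reduceStep σ s)
  else monomial s 1
termination_by (oldPart s).degree
decreasing_by exact degree_oldPart_reduceStep_lt hne ‹_›

variable {Δ σ U} (hne : σ.Nonempty)

lemma nfMon_of_not_mem {s : Fin (m + 2) →₀ ℕ} (h : (oldPart s).support ∉ Δ) :
    nfMon Δ σ U hne s = 0 := by
  rw [nfMon, if_pos h]

lemma nfMon_of_isAnnMultiple {s : Fin (m + 2) →₀ ℕ} (h : IsAnnMultiple U s) :
    nfMon Δ σ U hne s = 0 := by
  rw [nfMon]
  by_cases hface : (oldPart s).support ∈ Δ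
  · rw [if_neg (not_not_intro hface), if_pos h]
  · rw [if_pos hface]

lemma nfMon_of_subset {s : Fin (m + 2) →₀ ℕ} (hface : (oldPart s).support ∈ Δ)
    (hann : ¬IsAnnMultiple U s) (hσ : σ ⊆ (oldPart s).support) :
    nfMon Δ σ U hne s = nfMon Δ σ U hne (reduceStep σ s) := by
  rw [nfMon, if_neg (not_not_intro hface), if_neg hann, dif_pos hσ]

lemma nfMon_of_isStandard {s : Fin (m + 2) →₀ ℕ} (h : IsStandard Δ σ U s) :
    nfMon Δ σ U hne s = monomial s 1 := by
  rw [nfMon, if_neg (not_not_intro h.1), if_neg h.2.1, dif_neg h.2.2]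

lemma nfMon_sub_monomial_mem (s : Fin (m + 2) →₀ ℕ) :
    nfMon Δ σ U hne s - monomial s 1 ∈ unprojIdeal k Δ σ U := by
  by_cases hface : (oldPart s).support ∈ Δ
  · by_cases hann : IsAnnMultiple U s
    · rw [nfMon_of_isAnnMultiple hne hann, zero_sub]
      exact neg_mem (monomial_mem_unprojIdeal_of_isAnnMultiple hann 1)
    by_cases hσ : σ ⊆ (oldPart s).support
    · rw [nfMon_of_subset hne hface hann hσ, ← sub_add_sub_cancel _ (monomial (reduceStep σ s) 1)]
      exact add_mem (nfMon_sub_monomial_mem (reduceStep σ s))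
        (monomial_reduceStep_sub_mem_unprojIdeal hσ 1)
    · rw [nfMon_of_isStandard hne ⟨hface, hann, hσ⟩, sub_self]
      exact zero_mem _
  · rw [nfMon_of_not_mem hne hface, zero_sub]
    exact neg_mem (monomial_mem_unprojIdeal_of_not_mem hface 1)
termination_by (oldPart s).degree
decreasing_by exact degree_oldPart_reduceStep_lt hne hσ

lemma nfMon_mem_standardSpan (s : Fin (m + 2) →₀ ℕ) :
    nfMon Δ σ U hne s ∈ standardSpan Δ σ U := by
  by_cases hface : (oldPart s).support ∈ Δ
  · by_cases hann : IsAnnMultiple U s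
    · rw [nfMon_of_isAnnMultiple hne hann]
      exact zero_mem _
    by_cases hσ : σ ⊆ (oldPart s).support
    · rw [nfMon_of_subset hne hface hann hσ]
      exact nfMon_mem_standardSpan (reduceStep σ s)
    · rw [nfMon_of_isStandard hne ⟨hface, hann, hσ⟩]
      exact Submodule.subset_span ⟨s, ⟨hface, hann, hσ⟩, rfl⟩
  · rw [nfMon_of_not_mem hne hface]
    exact zero_mem _
termination_by (oldPart s).degree
decreasing_by exact degree_oldPart_reduceStep_lt hne hσ

section Confluence

variable (hΔ : IsComplex Δ)
include hΔ

lemma nfMon_add_mapDomain_of_not_mem {ρ : Finset (Fin m)} (hρ : ρ ∉ Δ)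
    (s : Fin (m + 2) →₀ ℕ) :
    nfMon Δ σ U hne (s + Finsupp.mapDomain oldVar (sqfreeExp ρ)) = 0 := by
  refine nfMon_of_not_mem hne fun hface => hρ (hΔ.2 hface ?_)
  simp [Finsupp.support_add_eq_union]

variable (hU : Ideal.span (Ideal.Quotient.mk (srIdeal k Δ) '' U) = Jσ k Δ σ)
  (hUmon : ∀ p ∈ U, ∃ s : Fin m →₀ ℕ, p = monomial s 1)
include hU hUmon

lemma nfMon_add_newVar_add_zVar (s : Fin (m + 2) →₀ ℕ) :
    nfMon Δ σ U hne (s + (Finsupp.single newVar 1 + Finsupp.single zVar 1)) =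
      nfMon Δ σ U hne (s + Finsupp.mapDomain oldVar (sqfreeExp σ)) := by
  set τ := (oldPart s).support
  set r := s + Finsupp.mapDomain oldVar (sqfreeExp σ) with hr
  have hsupp : (oldPart r).support = τ ∪ σ := by
    simp [τ, r, Finsupp.support_add_eq_union]
  by_cases hunion : τ ∪ σ ∈ Δ
  · have hann : ¬IsAnnMultiple U r := by
      rintro ⟨-, t, ht, hle⟩
      have ht' : t.support ⊆ τ ∪ σ := hsupp ▸ Finsupp.support_mono hle
      exact support_union_not_mem_of_mem_annExps hΔ hU ht
        (hΔ.2 hunion (Finset.union_subset ht' Finset.subset_union_right))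
    rw [nfMon_of_subset hne (hsupp ▸ hunion) hann (hsupp ▸ Finset.subset_union_right),
      reduceStep, hr, add_tsub_cancel_right, add_assoc]
  · rw [nfMon_of_not_mem hne (s := r) (hsupp ▸ hunion)]
    by_cases hface : τ ∈ Δ
    · obtain ⟨t, ht, hle⟩ := exists_mem_annExps_le hΔ hU hUmon hface hunion
      exact nfMon_of_isAnnMultiple hne ⟨by simp [newVar_ne_zVar], t, ht, by simpa using hle⟩
    · exact nfMon_of_not_mem hne (by simpa using hface)

end Confluence

lemma nfMon_add_of_mem_annExps {t : Fin m →₀ ℕ} (ht : t ∈ annExps U) (s : Fin (m + 2) →₀ ℕ) :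
    nfMon Δ σ U hne (s + (Finsupp.single newVar 1 + Finsupp.mapDomain oldVar t)) = 0 :=
  nfMon_of_isAnnMultiple hne ⟨by simp, t, ht, by simp⟩

variable (Δ σ U) in
noncomputable def nf : MvPolynomial (Fin (m + 2)) k →ₗ[k] MvPolynomial (Fin (m + 2)) k :=
  (basisMonomials (Fin (m + 2)) k).constr k (nfMon Δ σ U hne)

lemma nf_monomial (s : Fin (m + 2) →₀ ℕ) (c : k) :
    nf Δ σ U hne (monomial s c) = c • nfMon Δ σ U hne s := by
  have hbasis : basisMonomials (Fin (m + 2)) k s = monomial s 1 := by rw [coe_basisMonomials]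
  rw [← smul_monomial_one, map_smul, ← hbasis, nf, Module.Basis.constr_basis]

lemma nf_sub_self_mem (p : MvPolynomial (Fin (m + 2)) k) :
    nf Δ σ U hne p - p ∈ unprojIdeal k Δ σ U := by
  induction p using MvPolynomial.induction_on' with
  | monomial s c =>
    rw [nf_monomial, ← smul_monomial_one, ← smul_sub, smul_eq_C_mul]
    exact Ideal.mul_mem_left _ _ (nfMon_sub_monomial_mem hne s)
  | add p q hp hq =>
    rw [map_add, add_sub_add_comm]
    exact add_mem hp hq

lemma nf_mem_standardSpan (p : MvPolynomial (Fin (m + 2)) k) :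
    nf Δ σ U hne p ∈ standardSpan Δ σ U := by
  induction p using MvPolynomial.induction_on' with
  | monomial s c => rw [nf_monomial]; exact Submodule.smul_mem _ _ (nfMon_mem_standardSpan hne s)
  | add p q hp hq => rw [map_add]; exact add_mem hp hq

lemma nf_eq_self_of_mem_standardSpan {p : MvPolynomial (Fin (m + 2)) k}
    (hp : p ∈ standardSpan Δ σ U) : nf Δ σ U hne p = p := by
  induction hp using Submodule.span_induction with
  | mem x hx =>
    obtain ⟨s, hs, rfl⟩ := hx
    rw [nf_monomial, nfMon_of_isStandard hne hs, one_smul]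
  | zero => exact map_zero _
  | add x y _ _ hx hy => rw [map_add, hx, hy]
  | smul a x _ hx => rw [map_smul, hx]

omit hne in
lemma X_zVar_mul_mem_standardSpan {p : MvPolynomial (Fin (m + 2)) k}
    (hp : p ∈ standardSpan Δ σ U) : X zVar * p ∈ standardSpan Δ σ U := by
  induction hp using Submodule.span_induction with
  | mem x hx =>
    obtain ⟨s, ⟨hface, hann, hσ⟩, rfl⟩ := hx
    rw [X, monomial_mul, one_mul]
    refine Submodule.subset_span ⟨_, ⟨by simpa using hface, ?_, by simpa using hσ⟩, rfl⟩
    simpa [IsAnnMultiple, newVar_ne_zVar] using hann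
  | zero => rw [mul_zero]; exact zero_mem _
  | add x y _ _ hx hy => rw [mul_add]; exact add_mem hx hy
  | smul a x _ hx => rw [mul_smul_comm]; exact Submodule.smul_mem _ _ hx

lemma nf_mul_eq_zero_of_mem_unprojGens (hΔ : IsComplex Δ)
    (hU : Ideal.span (Ideal.Quotient.mk (srIdeal k Δ) '' U) = Jσ k Δ σ)
    (hUmon : ∀ p ∈ U, ∃ s : Fin m →₀ ℕ, p = monomial s 1)
    (p : MvPolynomial (Fin (m + 2)) k) {g : MvPolynomial (Fin (m + 2)) k}
    (hg : g ∈ unprojGens Δ σ U) : nf Δ σ U hne (p * g) = 0 := by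
  induction p using MvPolynomial.induction_on' with
  | add p q hp hq => rw [add_mul, map_add, hp, hq, add_zero]
  | monomial s c =>
    rcases hg with ⟨_, ⟨ρ, hρ, rfl⟩, rfl⟩ | rfl | ⟨u, hu, rfl⟩
    · rw [xmon_eq_monomial, rename_oldVar_monomial, monomial_mul, mul_one, nf_monomial,
        nfMon_add_mapDomain_of_not_mem hne hΔ hρ, smul_zero]
    · rw [X_newVar_mul_X_zVar, xmon_eq_monomial, rename_oldVar_monomial, mul_sub, monomial_mul,
        monomial_mul, mul_one, map_sub, nf_monomial, nf_monomial,
        nfMon_add_newVar_add_zVar hne hΔ hU hUmon, sub_self]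
    · obtain ⟨t, rfl⟩ := hUmon u hu
      dsimp only
      rw [rename_oldVar_monomial, X, monomial_mul, monomial_mul, one_mul, mul_one, nf_monomial,
        nfMon_add_of_mem_annExps hne hu, smul_zero]

lemma nf_eq_zero_of_mem_unprojIdeal (hΔ : IsComplex Δ)
    (hU : Ideal.span (Ideal.Quotient.mk (srIdeal k Δ) '' U) = Jσ k Δ σ)
    (hUmon : ∀ p ∈ U, ∃ s : Fin m →₀ ℕ, p = monomial s 1) {f : MvPolynomial (Fin (m + 2)) k}
    (hf : f ∈ unprojIdeal k Δ σ U) : nf Δ σ U hne f = 0 := by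
  rw [unprojIdeal_eq_span] at hf
  exact eq_zero_of_mem_span_of_mul_eq_zero (nf Δ σ U hne).toAddMonoidHom
    (fun p _ hg => nf_mul_eq_zero_of_mem_unprojGens hne hΔ hU hUmon p hg) hf

end NormalForm

theorem mk_X_zVar_mul_eq_zero {k : Type*} [Field k] {m : ℕ} {Δ : Set (Finset (Fin m))}
    {σ : Finset (Fin m)} {U : Set (MvPolynomial (Fin m) k)} (hne : σ.Nonempty)
    (hΔ : IsComplex Δ) (hU : Ideal.span (Ideal.Quotient.mk (srIdeal k Δ) '' U) = Jσ k Δ σ)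
    (hUmon : ∀ p ∈ U, ∃ s : Fin m →₀ ℕ, p = monomial s 1)
    (s : MvPolynomial (Fin (m + 2)) k ⧸ unprojIdeal k Δ σ U)
    (hs : Ideal.Quotient.mk _ (X zVar) * s = 0) : s = 0 :=
  eq_zero_of_mk_mul_eq_zero_of_normalForm (nf Δ σ U hne).toAddMonoidHom
    (fun _ => nf_eq_zero_of_mem_unprojIdeal hne hΔ hU hUmon) (nf_sub_self_mem hne)
    (nf_mem_standardSpan hne) (fun _ => nf_eq_self_of_mem_standardSpan hne) isRegular_X.left
    (fun _ => X_zVar_mul_mem_standardSpan) s hs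

section Specialization

variable {k : Type*} [Field k] {m : ℕ}

noncomputable def specializeZ : MvPolynomial (Fin (m + 2)) k →ₐ[k] MvPolynomial (Fin (m + 1)) k :=
  aeval (Fin.lastCases 0 X)

@[simp] lemma specializeZ_X_castSucc (j : Fin (m + 1)) :
    specializeZ (X j.castSucc : MvPolynomial (Fin (m + 2)) k) = X j := by
  simp [specializeZ]

@[simp] lemma specializeZ_X_last :
    specializeZ (X (Fin.last (m + 1)) : MvPolynomial (Fin (m + 2)) k) = 0 := by
  simp [specializeZ]

lemma specializeZ_rename_castSucc (q : MvPolynomial (Fin (m + 1)) k) :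
    specializeZ (rename Fin.castSucc q) = q := by
  have h : specializeZ.comp (rename Fin.castSucc) = AlgHom.id k (MvPolynomial (Fin (m + 1)) k) :=
    algHom_ext fun j => by simp
  exact AlgHom.congr_fun h q

lemma specializeZ_rename_oldVar (p : MvPolynomial (Fin m) k) :
    specializeZ (rename oldVar p) = rename Fin.castSucc p := by
  rw [← specializeZ_rename_castSucc (rename Fin.castSucc p), rename_rename]
  rfl

lemma specializeZ_surjective : Function.Surjective (specializeZ (k := k) (m := m)) :=
  Function.LeftInverse.surjective specializeZ_rename_castSucc

lemma ker_specializeZ :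
    RingHom.ker (specializeZ (k := k) (m := m)) = Ideal.span {X (Fin.last (m + 1))} := by
  set Z : Ideal (MvPolynomial (Fin (m + 2)) k) := Ideal.span {X (Fin.last (m + 1))}
  have hmod : ((Ideal.Quotient.mkₐ k Z).comp (rename Fin.castSucc)).comp specializeZ =
      Ideal.Quotient.mkₐ k Z := by
    refine algHom_ext fun j => ?_
    induction j using Fin.lastCases with
    | last =>
      simpa using (Ideal.Quotient.eq_zero_iff_mem.mpr (Ideal.mem_span_singleton_self _)).symm
    | cast j => simp
  refine le_antisymm (fun p hp => ?_) ?_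
  · have h := AlgHom.congr_fun hmod p
    rw [AlgHom.comp_apply, RingHom.mem_ker.mp hp, map_zero, Ideal.Quotient.mkₐ_eq_mk] at h
    exact Ideal.Quotient.eq_zero_iff_mem.mp h.symm
  · rw [Ideal.span_le, Set.singleton_subset_iff]
    exact RingHom.mem_ker.mpr specializeZ_X_last

end Specialization

section Stellar

variable {m : ℕ} {Δ : Set (Finset (Fin m))} {σ : Finset (Fin m)}

lemma last_not_mem_image_castSucc (τ : Finset (Fin m)) : Fin.last m ∉ τ.image Fin.castSucc := by
  simp [Fin.castSucc_ne_last]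

lemma image_castSucc_injective : Function.Injective (Finset.image (Fin.castSucc (n := m))) :=
  Finset.image_injective (Fin.castSucc_injective m)

lemma insert_last_image_castSucc_injective :
    Function.Injective fun τ : Finset (Fin m) => insert (Fin.last m) (τ.image Fin.castSucc) := by
  intro τ τ' h
  have h' := congrArg (Finset.erase · (Fin.last m)) h
  simp only [Finset.erase_insert (last_not_mem_image_castSucc _)] at h'
  exact image_castSucc_injective h'

lemma image_castSucc_ne_insert_last (τ τ' : Finset (Fin m)) :
    τ.image Fin.castSucc ≠ insert (Fin.last m) (τ'.image Fin.castSucc) :=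
  fun h => last_not_mem_image_castSucc τ (h ▸ Finset.mem_insert_self _ _)

lemma image_castSucc_mem_stellar_iff {τ : Finset (Fin m)} :
    τ.image Fin.castSucc ∈ stellar Δ σ ↔ τ ∈ Δ ∧ ¬σ ⊆ τ := by
  refine ⟨?_, fun h => Or.inl ⟨τ, h, rfl⟩⟩
  rintro (⟨τ', h, hτ'⟩ | ⟨τ', -, hτ'⟩)
  · exact image_castSucc_injective hτ' ▸ h
  · exact absurd hτ'.symm (image_castSucc_ne_insert_last _ _)

lemma insert_last_mem_stellar_iff {τ : Finset (Fin m)} :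
    insert (Fin.last m) (τ.image Fin.castSucc) ∈ stellar Δ σ ↔
      τ ∈ Δ ∧ ¬σ ⊆ τ ∧ τ ∪ σ ∈ Δ := by
  refine ⟨?_, fun h => Or.inr ⟨τ, h, rfl⟩⟩
  rintro (⟨τ', -, hτ'⟩ | ⟨τ', h, hτ'⟩)
  · exact absurd hτ' (image_castSucc_ne_insert_last _ _)
  · exact insert_last_image_castSucc_injective hτ' ▸ h

lemma exists_eq_image_castSucc_or_insert_last (ρ : Finset (Fin (m + 1))) :
    ∃ τ : Finset (Fin m),
      ρ = τ.image Fin.castSucc ∨ ρ = insert (Fin.last m) (τ.image Fin.castSucc) := by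
  refine ⟨Finset.univ.filter (Fin.castSucc · ∈ ρ), ?_⟩
  by_cases h : Fin.last m ∈ ρ
  · right; ext j; induction j using Fin.lastCases <;> simp [h, Fin.castSucc_ne_last]
  · left; ext j; induction j using Fin.lastCases <;> simp [h, Fin.castSucc_ne_last]

variable {k : Type*} [Field k] {U : Set (MvPolynomial (Fin m) k)}

lemma rename_castSucc_xmon (τ : Finset (Fin m)) :
    rename Fin.castSucc (xmon k τ) = xmon k (τ.image Fin.castSucc) := by
  rw [xmon, map_prod, xmon, Finset.prod_image (Fin.castSucc_injective m).injOn]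
  simp

lemma xmon_insert_last (τ : Finset (Fin m)) :
    xmon k (insert (Fin.last m) (τ.image Fin.castSucc)) =
      X (Fin.last m) * rename Fin.castSucc (xmon k τ) := by
  rw [xmon, Finset.prod_insert (last_not_mem_image_castSucc τ), ← xmon, rename_castSucc_xmon]

lemma rename_castSucc_mem_map_of_mem_srIdeal {q : MvPolynomial (Fin m) k}
    (hq : q ∈ srIdeal k Δ) :
    rename Fin.castSucc q ∈ (unprojIdeal k Δ σ U).map specializeZ := by
  rw [← specializeZ_rename_oldVar]
  exact Ideal.mem_map_of_mem _ (Ideal.mem_sup_left (Ideal.mem_sup_left (Ideal.mem_map_of_mem _ hq)))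

lemma rename_castSucc_xmon_mem_map {τ : Finset (Fin m)} (h : τ ∈ Δ → σ ⊆ τ) :
    rename Fin.castSucc (xmon k τ) ∈ (unprojIdeal k Δ σ U).map specializeZ := by
  by_cases hτ : τ ∈ Δ
  · refine Ideal.mem_of_dvd _ (map_dvd _ (xmon_dvd_xmon (h hτ))) ?_
    have hrel := Ideal.mem_map_of_mem specializeZ
      (relation_mem_unprojIdeal (Δ := Δ) (σ := σ) (U := U))
    simpa [specializeZ_rename_oldVar, newVar, zVar] using hrel
  · exact rename_castSucc_mem_map_of_mem_srIdeal (xmon_mem_srIdeal hτ)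

lemma X_last_mul_rename_castSucc_mem_map {u : MvPolynomial (Fin m) k} (hu : u ∈ U) :
    X (Fin.last m) * rename Fin.castSucc u ∈ (unprojIdeal k Δ σ U).map specializeZ := by
  have h := Ideal.mem_map_of_mem specializeZ
    (X_newVar_mul_rename_mem_unprojIdeal (Δ := Δ) (σ := σ) hu)
  simpa [specializeZ_rename_oldVar, newVar] using h

variable (hΔ : IsComplex Δ) (hU : Ideal.span (Ideal.Quotient.mk (srIdeal k Δ) '' U) = Jσ k Δ σ)
include hΔ hU

lemma X_last_mul_rename_monomial_mem_srIdeal_stellar {t : Fin m →₀ ℕ} (ht : t ∈ annExps U) :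
    X (Fin.last m) * rename Fin.castSucc (monomial t (1 : k)) ∈ srIdeal k (stellar Δ σ) := by
  by_cases hface : t.support ∈ Δ
  · refine Ideal.mem_of_dvd _ ?_ (xmon_mem_srIdeal (fun h => support_union_not_mem_of_mem_annExps
      hΔ hU ht (insert_last_mem_stellar_iff.mp h).2.2))
    exact xmon_insert_last (k := k) t.support ▸ mul_dvd_mul_left _
      (map_dvd _ (xmon_support_dvd_monomial t))
  · refine Ideal.mul_mem_left _ _ (Ideal.mem_of_dvd _ ?_
      (xmon_mem_srIdeal fun h => hface (image_castSucc_mem_stellar_iff.mp h).1))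
    exact rename_castSucc_xmon (k := k) t.support ▸ map_dvd _ (xmon_support_dvd_monomial t)

variable (hUmon : ∀ p ∈ U, ∃ s : Fin m →₀ ℕ, p = monomial s 1)
include hUmon

lemma map_specializeZ_unprojIdeal_le :
    (unprojIdeal k Δ σ U).map specializeZ ≤ srIdeal k (stellar Δ σ) := by
  rw [unprojIdeal_eq_span, Ideal.map_span, Ideal.span_le]
  rintro _ ⟨g, ⟨_, ⟨ρ, hρ, rfl⟩, rfl⟩ | rfl | ⟨u, hu, rfl⟩, rfl⟩
  · rw [SetLike.mem_coe, specializeZ_rename_oldVar, rename_castSucc_xmon]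
    exact xmon_mem_srIdeal fun h => hρ (image_castSucc_mem_stellar_iff.mp h).1
  · have hσ : σ.image Fin.castSucc ∉ stellar Δ σ :=
      fun h => (image_castSucc_mem_stellar_iff.mp h).2 subset_rfl
    simpa [specializeZ_rename_oldVar, rename_castSucc_xmon, newVar, zVar] using
      xmon_mem_srIdeal (k := k) hσ
  · obtain ⟨t, rfl⟩ := hUmon u hu
    simpa [specializeZ_rename_oldVar, newVar] using
      X_last_mul_rename_monomial_mem_srIdeal_stellar hΔ hU hu

lemma srIdeal_stellar_le_map_specializeZ :
    srIdeal k (stellar Δ σ) ≤ (unprojIdeal k Δ σ U).map specializeZ := by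
  rw [srIdeal, Ideal.span_le]
  rintro _ ⟨ρ, hρ, rfl⟩
  obtain ⟨τ, rfl | rfl⟩ := exists_eq_image_castSucc_or_insert_last ρ
  · rw [Set.mem_ofPred_eq, image_castSucc_mem_stellar_iff, not_and_not_right] at hρ
    simp only [SetLike.mem_coe]
    rw [← rename_castSucc_xmon]
    exact rename_castSucc_xmon_mem_map hρ
  · rw [Set.mem_ofPred_eq, insert_last_mem_stellar_iff] at hρ
    simp only [SetLike.mem_coe]
    rw [xmon_insert_last]
    by_cases h : τ ∈ Δ → σ ⊆ τ
    · exact Ideal.mul_mem_left _ _ (rename_castSucc_xmon_mem_map h)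
    obtain ⟨hτ, hστ⟩ : τ ∈ Δ ∧ ¬σ ⊆ τ := by tauto
    obtain ⟨t, ht, hle⟩ := exists_mem_annExps_le hΔ hU hUmon (t := sqfreeExp τ)
      (by simpa using hτ) (by simpa using fun hu => hρ ⟨hτ, hστ, hu⟩)
    refine Ideal.mem_of_dvd _ (mul_dvd_mul_left _ (map_dvd _ ?_))
      (X_last_mul_rename_castSucc_mem_map ht)
    rw [xmon_eq_monomial, monomial_dvd_monomial]
    exact ⟨Or.inr hle, one_dvd _⟩

lemma map_specializeZ_unprojIdeal :
    (unprojIdeal k Δ σ U).map specializeZ = srIdeal k (stellar Δ σ) :=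
  le_antisymm (map_specializeZ_unprojIdeal_le hΔ hU hUmon)
    (srIdeal_stellar_le_map_specializeZ hΔ hU hUmon)

end Stellar

end StellarUnprojection

open StellarUnprojection

theorem unprojection_z_regular_and_quotient_general (k : Type*) [Field k] {m : ℕ}
    (Δ : Set (Finset (Fin m))) (hΔ : IsComplex Δ)
    (σ : Finset (Fin m)) (hcard : 2 ≤ σ.card)
    (U : Set (MvPolynomial (Fin m) k))
    (hUmon : ∀ p ∈ U, ∃ s : Fin m →₀ ℕ, p = MvPolynomial.monomial s 1)
    (hU : Ideal.span (Ideal.Quotient.mk (srIdeal k Δ) '' U) = Jσ k Δ σ) :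
    (∀ s : MvPolynomial (Fin (m + 2)) k ⧸ unprojIdeal k Δ σ U,
        Ideal.Quotient.mk (unprojIdeal k Δ σ U) (X (Fin.last (m + 1))) * s = 0 → s = 0) ∧
    Nonempty (((MvPolynomial (Fin (m + 2)) k ⧸ unprojIdeal k Δ σ U) ⧸
        Ideal.span {Ideal.Quotient.mk (unprojIdeal k Δ σ U) (X (Fin.last (m + 1)))}) ≃ₐ[k]
      SR k (stellar Δ σ)) := by
  have hne : σ.Nonempty := Finset.card_pos.mp (by omega)
  exact ⟨mk_X_zVar_mul_eq_zero hne hΔ hU hUmon,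
    ⟨(quotientSpanMkAlgEquivOfKerEq specializeZ specializeZ_surjective _ ker_specializeZ).trans
      (Ideal.quotientEquivAlgOfEq k (map_specializeZ_unprojIdeal hΔ hU hUmon))⟩⟩

/-- for a Gorenstein* complex `Δ` and a face `σ` of dimension ≥ 1,
in the Kustin–Miller unprojection ring `S` the element `z` is `S`-regular, and
`S/(z) ≅ k[Δ_σ]` as `k`-algebras. -/
theorem unprojection_z_regular_and_quotient (k : Type*) [Field k] {m : ℕ}
    (Δ : Set (Finset (Fin m))) (hΔ : IsComplex Δ) (hG : IsGorensteinStar k Δ)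
    (σ : Finset (Fin m)) (hσ : σ ∈ Δ) (hcard : 2 ≤ σ.card)
    (U : Set (MvPolynomial (Fin m) k))
    (hUmon : ∀ p ∈ U, ∃ s : Fin m →₀ ℕ, p = MvPolynomial.monomial s 1)
    (hU : Ideal.span (Ideal.Quotient.mk (srIdeal k Δ) '' U) = Jσ k Δ σ) :
    (∀ s : MvPolynomial (Fin (m + 2)) k ⧸ unprojIdeal k Δ σ U,
        Ideal.Quotient.mk (unprojIdeal k Δ σ U) (X (Fin.last (m + 1))) * s = 0 → s = 0) ∧
    Nonempty (((MvPolynomial (Fin (m + 2)) k ⧸ unprojIdeal k Δ σ U) ⧸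
        Ideal.span {Ideal.Quotient.mk (unprojIdeal k Δ σ U) (X (Fin.last (m + 1)))}) ≃ₐ[k]
      SR k (stellar Δ σ)) :=
  unprojection_z_regular_and_quotient_general k Δ hΔ σ hcard U hUmon hU
end
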